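/- arXiv:1906.00172 — 2 statements merged into one kernel-verified Lean document; each statement's English description precedes it below -/
import Mathlib

section
/- Let A be an associative ℚ-algebra and let X, Y ∈ A be nilpotent elements such that moreover X + εY is nilpotent in A[ε] := A ⊗ ℚ[ε]/(ε²). Then in A[ε] one has the identity e^{-X} · e^{X + εY} = 1 + ε · f(ad_X)(Y), where f(t) = (1 − e^{-t})/t = ∑_{n≥0} (−1)^n t^n/(n+1)! and f(ad_X)(Y) := ∑_{n≥0} (−1)^n ad_X^n(Y)/(n+1)! (a finite sum since ad_X is nilpotent). -/
open Finset TrivSqZeroExt DualNumber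

section ExpAux

variable {A : Type*} [Ring A] [Algebra ℚ A]

private lemma aux_pow_zero {x : A} {N : ℕ} (hx : x ^ N = 0) {j : ℕ} (h : N ≤ j) : x ^ j = 0 := by
  calc x ^ j = x ^ N * x ^ (j - N) := by rw [← pow_add]; congr 1; omega
  _ = 0 := by rw [hx, zero_mul]

private lemma aux_alt_choose (m : ℕ) (a : ℕ) :
    ∑ r ∈ range (a+1), (-1:ℚ)^r * ((m+1).choose r : ℚ) = (-1:ℚ)^a * (m.choose a : ℚ) := by
  induction a with
  | zero => simp
  | succ a ih =>
    rw [sum_range_succ, ih, Nat.choose_succ_succ m a]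
    push_cast; ring

private lemma aux_sq_tri {B : Type*} [AddCommMonoid B] (n : ℕ) (f : ℕ → ℕ → B)
    (hf : ∀ i j, n ≤ i + j → f i j = 0) :
    ∑ i ∈ range n, ∑ j ∈ range n, f i j =
      ∑ m ∈ range n, ∑ k ∈ range (m+1), f k (m - k) := by
  rw [sum_range_diag_flip]
  refine sum_congr rfl fun i _ => ?_
  refine (sum_subset (range_subset_range.2 (Nat.sub_le n i)) fun j hj hj' => ?_).symm
  apply hf
  simp only [mem_range, not_lt] at hj hj'
  omega

private lemma aux_alt_fact (m : ℕ) :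
    ∑ k ∈ range (m+1), (-1:ℚ)^k * ((k.factorial : ℚ) * (((m-k).factorial : ℚ)))⁻¹
      = if m = 0 then 1 else 0 := by
  have h : ∀ k ∈ range (m+1), (-1:ℚ)^k * ((k.factorial : ℚ) * (((m-k).factorial : ℚ)))⁻¹
      = ((m.factorial : ℚ))⁻¹ * ((-1)^k * (m.choose k : ℚ)) := by
    intro k hk
    have hk' : k ≤ m := by simpa [Nat.lt_succ_iff] using mem_range.mp hk
    have key : ((m.choose k : ℚ)) * (k.factorial : ℚ) * ((m-k).factorial : ℚ) = (m.factorial : ℚ) := by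
      exact_mod_cast congrArg (Nat.cast : ℕ → ℚ) (Nat.choose_mul_factorial_mul_factorial hk')
    have h1 : (k.factorial : ℚ) ≠ 0 := Nat.cast_ne_zero.2 k.factorial_ne_zero
    have h2 : ((m-k).factorial : ℚ) ≠ 0 := Nat.cast_ne_zero.2 (m-k).factorial_ne_zero
    have h3 : (m.factorial : ℚ) ≠ 0 := Nat.cast_ne_zero.2 m.factorial_ne_zero
    field_simp
    linear_combination (-1:ℚ) * key
  rw [sum_congr rfl h, ← mul_sum]
  have := Int.alternating_sum_range_choose (n := m)
  have hq : ∑ k ∈ range (m+1), ((-1:ℚ)^k * (m.choose k : ℚ)) = if m = 0 then 1 else 0 := by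
    exact_mod_cast congrArg (Int.cast : ℤ → ℚ) this
  rw [hq]
  rcases Nat.eq_zero_or_pos m with h0 | h0
  · subst h0; simp
  · simp [Nat.pos_iff_ne_zero.mp h0]

private lemma aux_coef (a q : ℕ) :
    ∑ r ∈ range (a+1), (-1:ℚ)^r * ((r.factorial : ℚ) * ((((a - r) + q + 1).factorial : ℚ)))⁻¹
      = (-1:ℚ)^a * ((a+q).choose a : ℚ) * (((a+q+1).factorial : ℚ))⁻¹ := by
  have h : ∀ r ∈ range (a+1), (-1:ℚ)^r * ((r.factorial : ℚ) * ((((a - r) + q + 1).factorial : ℚ)))⁻¹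
      = (((a+q+1).factorial : ℚ))⁻¹ * ((-1)^r * ((a+q+1).choose r : ℚ)) := by
    intro r hr
    have hr' : r ≤ a := by simpa [Nat.lt_succ_iff] using mem_range.mp hr
    have hr2 : r ≤ a + q + 1 := by omega
    have key0 := Nat.choose_mul_factorial_mul_factorial hr2
    have hsub : a + q + 1 - r = (a - r) + q + 1 := by omega
    rw [hsub] at key0
    have key : (((a+q+1).choose r : ℚ)) * (r.factorial : ℚ) * (((a-r)+q+1).factorial : ℚ)
        = ((a+q+1).factorial : ℚ) := by exact_mod_cast congrArg (Nat.cast : ℕ → ℚ) key0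
    have h1 : (r.factorial : ℚ) ≠ 0 := Nat.cast_ne_zero.2 r.factorial_ne_zero
    have h2 : (((a-r)+q+1).factorial : ℚ) ≠ 0 := Nat.cast_ne_zero.2 ((a-r)+q+1).factorial_ne_zero
    have h3 : ((a+q+1).factorial : ℚ) ≠ 0 := Nat.cast_ne_zero.2 (a+q+1).factorial_ne_zero
    field_simp
    linear_combination (-1:ℚ) * key
  rw [sum_congr rfl h, ← mul_sum, aux_alt_choose (a+q) a]
  ring

private lemma aux_exp_stab {B : Type*} [Ring B] [Algebra ℚ B] (x : B) (m m' : ℕ)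
    (hx : x ^ m = 0) (h : m ≤ m') :
    ∑ j ∈ range m, ((j.factorial : ℚ))⁻¹ • x ^ j
      = ∑ j ∈ range m', ((j.factorial : ℚ))⁻¹ • x ^ j := by
  apply sum_subset (range_subset_range.2 h)
  intro j hj hj'
  rw [aux_pow_zero hx (by simpa using hj'), smul_zero]

private lemma aux_exp_neg_mul_exp (x : A) (M : ℕ) (hx : x ^ M = 0) :
    (∑ j ∈ range M, ((j.factorial : ℚ))⁻¹ • (-x) ^ j) *
      (∑ j ∈ range M, ((j.factorial : ℚ))⁻¹ • x ^ j) = 1 := by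
  rw [sum_mul_sum]
  have h1 : ∀ i j : ℕ, (((i.factorial:ℚ))⁻¹ • (-x)^i) * (((j.factorial:ℚ))⁻¹ • x^j)
      = ((-1:ℚ)^i * ((i.factorial:ℚ) * (j.factorial:ℚ))⁻¹) • x^(i+j) := by
    intro i j
    rw [← neg_one_smul ℚ x, smul_pow, smul_smul, smul_mul_smul_comm, ← pow_add, mul_inv]
    ring_nf
  simp only [h1]
  rw [aux_sq_tri M (fun i j => ((-1:ℚ)^i * ((i.factorial:ℚ) * (j.factorial:ℚ))⁻¹) • x^(i+j))
      (by intro i j hij; rw [aux_pow_zero hx hij, smul_zero])]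
  have h2 : ∀ m ∈ range M, ∑ k ∈ range (m+1),
      ((-1:ℚ)^k * ((k.factorial:ℚ) * ((m-k).factorial:ℚ))⁻¹) • x^(k+(m-k))
      = if m = 0 then (1:A) else 0 := by
    intro m _
    have hsum : ∀ k ∈ range (m+1), ((-1:ℚ)^k * ((k.factorial:ℚ) * ((m-k).factorial:ℚ))⁻¹) • x^(k+(m-k))
        = ((-1:ℚ)^k * ((k.factorial:ℚ) * ((m-k).factorial:ℚ))⁻¹) • x^m := by
      intro k hk
      have : k + (m - k) = m := by have := mem_range.mp hk; omega
      rw [this]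
    rw [sum_congr rfl hsum, ← sum_smul, aux_alt_fact m]
    rcases Nat.eq_zero_or_pos m with h0 | h0
    · subst h0; simp
    · simp [Nat.pos_iff_ne_zero.mp h0]
  rw [sum_congr rfl h2]
  rcases Nat.eq_zero_or_pos M with h0 | h0
  · subst h0; simp at hx; simp [hx]
  · rw [sum_ite_eq' (range M) 0 (fun _ => (1:A))]
    simp [h0]

private lemma aux_eps_mul (Yv : A) : (ε * inl Yv : DualNumber A) = inr Yv := by
  show (inr 1 * inl Yv : DualNumber A) = inr Yv
  rw [TrivSqZeroExt.inr_mul_inl]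
  simp [MulOpposite.smul_eq_mul_unop]

private lemma aux_snd_W_pow (X Y : A) (j : ℕ) :
    snd ((inl X + inr Y : DualNumber A) ^ j) = ∑ i ∈ range j, X ^ i * Y * X ^ (j - 1 - i) := by
  induction j with
  | zero => simp
  | succ j ih =>
    rw [pow_succ, DualNumber.snd_mul, ih, fst_pow]
    have hfst : fst (inl X + inr Y : DualNumber A) = X := by simp
    have hsnd : snd (inl X + inr Y : DualNumber A) = Y := by simp
    rw [hfst, hsnd, sum_range_succ, sum_mul]
    have h1 : ∀ i ∈ range j, X ^ i * Y * X ^ (j - 1 - i) * X = X ^ i * Y * X ^ (j + 1 - 1 - i) := by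
      intro i hi
      have hi' : i < j := mem_range.mp hi
      rw [mul_assoc, ← pow_succ]
      congr 2
      omega
    rw [sum_congr rfl h1]
    have : X ^ j * Y * X ^ (j + 1 - 1 - j) = X ^ j * Y := by
      simp
    rw [this]
    exact add_comm _ _

private lemma aux_ad_pow (X Y : A) (n : ℕ) :
    ((LinearMap.mulLeft ℚ X - LinearMap.mulRight ℚ X) ^ n) Y
      = ∑ i ∈ range (n+1), ((-1:ℚ)^(n-i) * (n.choose i : ℚ)) • (X^i * Y * X^(n-i)) := by
  have hR : -(LinearMap.mulRight ℚ X) = LinearMap.mulRight ℚ (-X) := by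
    ext a; simp
  have hc : Commute (LinearMap.mulLeft ℚ X) (-(LinearMap.mulRight ℚ X)) :=
    (LinearMap.commute_mulLeft_right (R := ℚ) X X).neg_right
  rw [sub_eq_add_neg, hc.add_pow]
  rw [LinearMap.coe_sum, Finset.sum_apply]
  refine sum_congr rfl fun i hi => ?_
  have hi' : i ≤ n := by have := mem_range.mp hi; omega
  rw [hR, LinearMap.pow_mulLeft, LinearMap.pow_mulRight]
  have hnegpow : (-X) ^ (n - i) = ((-1:ℚ)^(n-i)) • X ^ (n-i) := by
    rw [← neg_one_smul ℚ X, smul_pow]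
  rw [Module.End.mul_apply, Module.End.mul_apply]
  simp only [Module.End.natCast_apply, LinearMap.mulRight_apply, LinearMap.mulLeft_apply,
    hnegpow, mul_smul_comm, smul_mul_assoc, Nat.cast_smul_eq_nsmul]
  rw [smul_comm, ← Nat.cast_smul_eq_nsmul ℚ, smul_smul, mul_assoc]
  ring_nf

private lemma aux_shrink (X Y : A) {N M : ℕ} (hX : X ^ N = 0) (h : N ≤ M)
    (c : ℕ → ℕ → ℚ) :
    ∑ p ∈ range M, ∑ q ∈ range M, c p q • (X^p * Y * X^q)
    = ∑ p ∈ range N, ∑ q ∈ range N, c p q • (X^p * Y * X^q) := by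
  have inner : ∀ p, ∑ q ∈ range M, c p q • (X^p * Y * X^q)
      = ∑ q ∈ range N, c p q • (X^p * Y * X^q) := by
    intro p
    refine (sum_subset (range_subset_range.2 h) fun q _ hq' => ?_).symm
    have : X ^ q = 0 := aux_pow_zero hX (by simpa using hq')
    rw [this, mul_zero, smul_zero]
  rw [sum_congr rfl fun p _ => inner p]
  refine (sum_subset (range_subset_range.2 h) fun p _ hp' => ?_).symm
  have : X ^ p = 0 := aux_pow_zero hX (by simpa using hp')
  refine sum_eq_zero fun q _ => ?_
  rw [this, zero_mul, zero_mul, smul_zero]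

private lemma claim_b (X Y : A) (N : ℕ) (hX : X ^ N = 0) :
    (∑ r ∈ range N, ((r.factorial : ℚ))⁻¹ • (-X) ^ r) *
      (∑ p ∈ range N, ∑ q ∈ range N, (((p+q+1).factorial : ℚ))⁻¹ • (X^p * Y * X^q))
    = ∑ a ∈ range N, ∑ b ∈ range N,
        ((-1:ℚ)^a * ((a+b).choose a : ℚ) * (((a+b+1).factorial : ℚ))⁻¹) • (X^a * Y * X^b) := by
  have expand : (∑ r ∈ range N, ((r.factorial : ℚ))⁻¹ • (-X) ^ r) *
      (∑ p ∈ range N, ∑ q ∈ range N, (((p+q+1).factorial : ℚ))⁻¹ • (X^p * Y * X^q))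
      = ∑ r ∈ range N, ∑ p ∈ range N, ∑ q ∈ range N,
        ((-1:ℚ)^r * ((r.factorial : ℚ) * (((p+q+1).factorial : ℚ)))⁻¹) • (X^(r+p) * Y * X^q) := by
    rw [sum_mul]
    refine sum_congr rfl fun r _ => ?_
    rw [mul_sum]
    refine sum_congr rfl fun p _ => ?_
    rw [mul_sum]
    refine sum_congr rfl fun q _ => ?_
    rw [← neg_one_smul ℚ X, smul_pow, smul_smul, smul_mul_smul_comm]
    congr 1
    · rw [mul_inv]; ring
    · rw [← mul_assoc, ← mul_assoc, ← pow_add]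
  rw [expand]
  rw [aux_sq_tri N (fun r p => ∑ q ∈ range N,
      ((-1:ℚ)^r * ((r.factorial : ℚ) * (((p+q+1).factorial : ℚ)))⁻¹) • (X^(r+p) * Y * X^q))
      (by
        intro i j hij
        refine sum_eq_zero fun q _ => ?_
        rw [aux_pow_zero hX hij, zero_mul, zero_mul, smul_zero])]
  refine sum_congr rfl fun a ha => ?_
  rw [sum_comm]
  refine sum_congr rfl fun q _ => ?_
  have step : ∀ k ∈ range (a+1),
      ((-1:ℚ)^k * ((k.factorial : ℚ) * ((((a-k)+q+1).factorial : ℚ)))⁻¹) • (X^(k+(a-k)) * Y * X^q)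
      = ((-1:ℚ)^k * ((k.factorial : ℚ) * ((((a-k)+q+1).factorial : ℚ)))⁻¹) • (X^a * Y * X^q) := by
    intro k hk
    have : k + (a - k) = a := by have := mem_range.mp hk; omega
    rw [this]
  rw [sum_congr rfl step, ← sum_smul, aux_coef a q]

private lemma claim_c (X Y : A) (N : ℕ) (hX : X ^ N = 0) :
    ∑ n ∈ range (2*N), ((-1:ℚ)^n * (((n+1).factorial : ℚ))⁻¹) •
        (((LinearMap.mulLeft ℚ X - LinearMap.mulRight ℚ X) ^ n) Y)
    = ∑ a ∈ range N, ∑ b ∈ range N,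
        ((-1:ℚ)^a * ((a+b).choose a : ℚ) * (((a+b+1).factorial : ℚ))⁻¹) • (X^a * Y * X^b) := by
  have expand : ∀ n ∈ range (2*N), ((-1:ℚ)^n * (((n+1).factorial : ℚ))⁻¹) •
        (((LinearMap.mulLeft ℚ X - LinearMap.mulRight ℚ X) ^ n) Y)
      = ∑ i ∈ range (n+1),
        ((-1:ℚ)^i * ((i+(n-i)).choose i : ℚ) * (((i+(n-i)+1).factorial : ℚ))⁻¹) • (X^i * Y * X^(n-i)) := by
    intro n _
    rw [aux_ad_pow, smul_sum]
    refine sum_congr rfl fun i hi => ?_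
    have hi' : i ≤ n := Nat.lt_succ_iff.mp (mem_range.mp hi)
    rw [smul_smul]
    congr 1
    have h1 : i + (n - i) = n := by omega
    rw [h1]
    have h2 : (-1:ℚ)^n * (-1:ℚ)^(n-i) = (-1:ℚ)^i := by
      rw [← pow_add]
      have h3 : n + (n - i) = i + 2*(n-i) := by omega
      rw [h3, pow_add, pow_mul]
      simp
    linear_combination (((n+1).factorial:ℚ))⁻¹ * (n.choose i : ℚ) * h2
  rw [sum_congr rfl expand]
  rw [← aux_sq_tri (2*N) (fun a b =>
      ((-1:ℚ)^a * ((a+b).choose a : ℚ) * (((a+b+1).factorial : ℚ))⁻¹) • (X^a * Y * X^b))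
      (by
        intro i j hij
        rcases (by omega : N ≤ i ∨ N ≤ j) with h | h
        · rw [aux_pow_zero hX h, zero_mul, zero_mul, smul_zero]
        · rw [aux_pow_zero hX h, mul_zero, smul_zero])]
  exact aux_shrink X Y hX (by omega) _

private lemma claim_a (X Y : A) (N K : ℕ) (hX : X ^ N = 0)
    (hS : ∀ j, K ≤ j → (∑ i ∈ range j, X^i * Y * X^(j-1-i)) = 0) :
    ∑ j ∈ range K, ((j.factorial : ℚ))⁻¹ • (∑ i ∈ range j, X^i * Y * X^(j-1-i))
    = ∑ p ∈ range N, ∑ q ∈ range N, (((p+q+1).factorial : ℚ))⁻¹ • (X^p * Y * X^q) := by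
  have step1 : ∑ j ∈ range K, ((j.factorial : ℚ))⁻¹ • (∑ i ∈ range j, X^i * Y * X^(j-1-i))
      = ∑ j ∈ range (2*N+K+1), ((j.factorial : ℚ))⁻¹ • (∑ i ∈ range j, X^i * Y * X^(j-1-i)) := by
    refine sum_subset (range_subset_range.2 (by omega)) fun j _ hj' => ?_
    rw [hS j (by simpa using hj'), smul_zero]
  rw [step1, sum_range_succ']
  simp only [range_zero, sum_empty, smul_zero, add_zero]
  have step2 : ∀ n ∈ range (2*N+K), (((n+1).factorial:ℚ))⁻¹ • (∑ i ∈ range (n+1), X^i * Y * X^(n+1-1-i))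
      = ∑ i ∈ range (n+1), (((i+(n-i)+1).factorial:ℚ))⁻¹ • (X^i * Y * X^(n-i)) := by
    intro n _
    rw [smul_sum]
    refine sum_congr rfl fun i hi => ?_
    have hi' : i ≤ n := Nat.lt_succ_iff.mp (mem_range.mp hi)
    have e1 : n + 1 - 1 - i = n - i := by omega
    have e2 : i + (n - i) + 1 = n + 1 := by omega
    rw [e1, e2]
  rw [sum_congr rfl step2]
  rw [← aux_sq_tri (2*N+K) (fun p q => (((p+q+1).factorial:ℚ))⁻¹ • (X^p * Y * X^q))
      (by
        intro i j hij
        rcases (by omega : N ≤ i ∨ N ≤ j) with h | h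
        · rw [aux_pow_zero hX h, zero_mul, zero_mul, smul_zero]
        · rw [aux_pow_zero hX h, mul_zero, smul_zero])]
  exact aux_shrink X Y hX (by omega) _

end ExpAux

open Finset TrivSqZeroExt DualNumber in
/-- Let `A` be an associative unital `ℚ`-algebra, `X, Y ∈ A` nilpotent, and assume
`X + εY` is nilpotent in the dual numbers `A[ε]` (with `(X + εY)^K = 0`).  Then in `A[ε]`
one has `e^{-X} · e^{X+εY} = 1 + ε · f(ad_X)(Y)` where `f(t) = (1-e^{-t})/t`, i.e.
`f(ad_X)(Y) = ∑_{n} (-1)^n ad_X^n(Y)/(n+1)!`, a finite sum since `ad_X^{2N-1} = 0`. -/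
theorem exp_neg_mul_exp_dual_number (A : Type*) [Ring A] [Algebra ℚ A]
    (X Y : A) (N : ℕ) (hX : X ^ N = 0) (hY : IsNilpotent Y)
    (K : ℕ) (hK : (inl X + ε * inl Y : DualNumber A) ^ K = 0) :
    (∑ j ∈ range N, ((j.factorial : ℚ))⁻¹ • (-(inl X : DualNumber A)) ^ j) *
      (∑ j ∈ range K, ((j.factorial : ℚ))⁻¹ • (inl X + ε * inl Y : DualNumber A) ^ j) =
    1 + (inr (∑ n ∈ range (2 * N), ((-1 : ℚ) ^ n * (((n + 1).factorial : ℚ))⁻¹) •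
      (((LinearMap.mulLeft ℚ X - LinearMap.mulRight ℚ X : Module.End ℚ A) ^ n) Y))
      : DualNumber A) := by
  rw [aux_eps_mul] at hK ⊢
  set W : DualNumber A := inl X + inr Y with hW
  have hfstW : fst W = X := by simp [hW]
  have hXK : X ^ K = 0 := by
    have := congrArg fst hK
    rwa [fst_pow, hfstW, fst_zero] at this
  have hnegX : (-X) ^ N = 0 := by
    rw [← neg_one_smul ℚ X, smul_pow, hX, smul_zero]
  have hSj : ∀ j, K ≤ j → (∑ i ∈ range j, X^i * Y * X^(j-1-i)) = 0 := by
    intro j hj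
    rw [← aux_snd_W_pow, aux_pow_zero hK hj, snd_zero]
  have hS1fst : fst (∑ j ∈ range N, ((j.factorial : ℚ))⁻¹ • (-(inl X : DualNumber A)) ^ j)
      = ∑ j ∈ range N, ((j.factorial : ℚ))⁻¹ • (-X) ^ j := by
    rw [fst_sum]
    refine sum_congr rfl fun j _ => ?_
    rw [fst_smul, fst_pow, fst_neg, fst_inl]
  have hS1snd : snd (∑ j ∈ range N, ((j.factorial : ℚ))⁻¹ • (-(inl X : DualNumber A)) ^ j)
      = 0 := by
    rw [snd_sum]
    refine sum_eq_zero fun j _ => ?_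
    rw [← inl_neg, inl_pow, snd_smul, snd_inl, smul_zero]
  have hS2fst : fst (∑ j ∈ range K, ((j.factorial : ℚ))⁻¹ • W ^ j)
      = ∑ j ∈ range K, ((j.factorial : ℚ))⁻¹ • X ^ j := by
    rw [fst_sum]
    refine sum_congr rfl fun j _ => ?_
    rw [fst_smul, fst_pow, hfstW]
  have hS2snd : snd (∑ j ∈ range K, ((j.factorial : ℚ))⁻¹ • W ^ j)
      = ∑ j ∈ range K, ((j.factorial : ℚ))⁻¹ • (∑ i ∈ range j, X^i * Y * X^(j-1-i)) := by
    rw [snd_sum]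
    refine sum_congr rfl fun j _ => ?_
    rw [snd_smul, aux_snd_W_pow]
  refine TrivSqZeroExt.ext ?_ ?_
  · rw [fst_mul, hS1fst, hS2fst, fst_add, fst_one, fst_inr, add_zero]
    rw [aux_exp_stab (-X) N (N+K) hnegX (by omega),
        aux_exp_stab X K (N+K) hXK (by omega)]
    exact aux_exp_neg_mul_exp X (N+K) (aux_pow_zero hX (by omega))
  · rw [DualNumber.snd_mul, hS1fst, hS1snd, hS2fst, hS2snd, zero_mul, add_zero]
    rw [snd_add, snd_one, snd_inr, zero_add]
    rw [claim_a X Y N K hX hSj, claim_b X Y N hX, claim_c X Y N hX]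
end

section
/- Let V be a finite-dimensional vector space over a field k and M ∈ End(V). Then in k[t] one has det(1 + t·M) = ∑_{j=0}^{dim V} Tr(Λ^j M) · t^j. -/
/-- The endomorphism `Λ^j g` of the `j`-th exterior power `⋀[R]^j M` induced
functorially by an endomorphism `g` of `M`. -/
noncomputable def exteriorPowerMap (R M : Type*) [CommRing R] [AddCommGroup M] [Module R M]
    (j : ℕ) (g : M →ₗ[R] M) : ⋀[R]^j M →ₗ[R] ⋀[R]^j M :=
  (ExteriorAlgebra.map g).toLinearMap.restrict (p := ⋀[R]^j M) (q := ⋀[R]^j M)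
    (fun x hx => by
      have h : Submodule.map (ExteriorAlgebra.map g).toLinearMap (⋀[R]^j M) ≤ ⋀[R]^j M := by
        show Submodule.map _ ((LinearMap.range (ExteriorAlgebra.ι R (M := M))) ^ j) ≤ _
        rw [Submodule.map_pow]
        refine pow_le_pow_left' ?_ j
        rw [ExteriorAlgebra.ι_range_map_map]
        exact (Submodule.map_mono le_top).trans (le_of_eq (Submodule.map_top _))
      exact h ⟨x, hx, rfl⟩)

section Aux

open ExteriorAlgebra Finset

variable {k : Type*} [Field k] {V : Type*} [AddCommGroup V] [Module k V]
  {n : ℕ} (b : Module.Basis (Fin n) k V) (j : ℕ)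

/-- The `j`-tuple of basis vectors indexed by a `j`-subset `s`, in increasing order. -/
noncomputable def wedgeVec (s : {s : Finset (Fin n) // s.card = j}) : Fin j → V :=
  fun i => b (s.1.orderIsoOfFin s.2 i)

noncomputable def wedgeVecEl (s : {s : Finset (Fin n) // s.card = j}) : ⋀[k]^j V :=
  ⟨ιMulti k j (wedgeVec b j s), ιMulti_range k j (Set.mem_range_self _)⟩

/-- The alternating form giving the `s`-coordinate. -/
noncomputable def coordAlt (s : {s : Finset (Fin n) // s.card = j}) : V [⋀^Fin j]→ₗ[k] k :=
  (Matrix.detRowAlternating (n := Fin j) (R := k)).compLinearMap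
    (LinearMap.pi fun l => b.coord (s.1.orderIsoOfFin s.2 l))

lemma coordAlt_apply (s : {s : Finset (Fin n) // s.card = j}) (v : Fin j → V) :
    coordAlt b j s v =
      Matrix.det (Matrix.of fun i l => b.repr (v i) (s.1.orderIsoOfFin s.2 l)) := rfl

lemma coordAlt_wedgeVec (s t : {s : Finset (Fin n) // s.card = j}) :
    coordAlt b j s (wedgeVec b j t) = if s = t then 1 else 0 := by
  rw [coordAlt_apply]
  rcases eq_or_ne s t with h | h
  · subst h
    rw [if_pos rfl]
    have : (Matrix.of fun i l => (b.repr (wedgeVec b j s i)) ((s.1.orderIsoOfFin s.2) l))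
        = (1 : Matrix (Fin j) (Fin j) k) := by
      ext i l
      simp only [Matrix.of_apply, wedgeVec, Module.Basis.repr_self, Finsupp.single_apply,
        Matrix.one_apply, EmbeddingLike.apply_eq_iff_eq]
      simp [eq_comm]
    rw [this, Matrix.det_one]
  · rw [if_neg h]
    -- some element of s not in t
    obtain ⟨a, has, hat⟩ : ∃ a ∈ s.1, a ∉ t.1 := by
      by_contra hc
      push_neg at hc
      exact h (Subtype.ext (Finset.eq_of_subset_of_card_le hc (by rw [s.2, t.2])))
    apply Matrix.det_eq_zero_of_column_eq_zero ((s.1.orderIsoOfFin s.2).symm ⟨a, has⟩)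
    intro i
    simp only [Matrix.of_apply, wedgeVec, Module.Basis.repr_self, OrderIso.apply_symm_apply,
      Finsupp.single_apply]
    rw [if_neg]
    intro hh
    exact hat (hh ▸ (t.1.orderIsoOfFin t.2 i).2)

/-- The `s`-coordinate functional on the `j`-th exterior power. -/
noncomputable def coordFun (s : {s : Finset (Fin n) // s.card = j}) : ⋀[k]^j V →ₗ[k] k :=
  (ExteriorAlgebra.liftAlternating
      (Function.update (0 : ∀ i, V [⋀^Fin i]→ₗ[k] k) j (coordAlt b j s))).comp
    (Submodule.subtype _)

lemma coordFun_ιMulti (s : {s : Finset (Fin n) // s.card = j}) (v : Fin j → V)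
    (hv : ιMulti k j v ∈ ⋀[k]^j V) :
    coordFun b j s ⟨ιMulti k j v, hv⟩ = coordAlt b j s v := by
  simp only [coordFun, LinearMap.comp_apply, Submodule.subtype_apply,
    liftAlternating_apply_ιMulti, Function.update_self]

lemma coordFun_wedgeVecEl (s t : {s : Finset (Fin n) // s.card = j}) :
    coordFun b j s (wedgeVecEl b j t) = if s = t then 1 else 0 := by
  rw [wedgeVecEl, coordFun_ιMulti, coordAlt_wedgeVec]

lemma ιMulti_basis_mem_span (g : Fin j → Fin n) :
    ιMulti k j (fun i => b (g i)) ∈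
      Submodule.span k (Set.range fun s => ιMulti k j (wedgeVec b j s)) := by
  by_cases hg : Function.Injective g
  · set s : {s : Finset (Fin n) // s.card = j} :=
      ⟨Finset.image g Finset.univ, by rw [Finset.card_image_of_injective _ hg, Finset.card_univ,
        Fintype.card_fin]⟩ with hs
    have hmem : ∀ i, g i ∈ s.1 := fun i => Finset.mem_image_of_mem g (Finset.mem_univ i)
    set σ : Fin j → Fin j := fun i => (s.1.orderIsoOfFin s.2).symm ⟨g i, hmem i⟩ with hσ
    have hσinj : Function.Injective σ := by
      intro a c h
      apply hg
      have := congrArg (fun x => ((s.1.orderIsoOfFin s.2) x : Fin n)) h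
      simpa [σ] using this
    have hσbij : Function.Bijective σ := (Finite.injective_iff_bijective).1 hσinj
    set e : Equiv.Perm (Fin j) := Equiv.ofBijective σ hσbij with he
    have hcomp : (fun i => b (g i)) = wedgeVec b j s ∘ e := by
      funext i
      simp only [Function.comp_apply, wedgeVec, he, Equiv.ofBijective_apply, hσ,
        OrderIso.apply_symm_apply]
    rw [hcomp, AlternatingMap.map_perm]
    have hsp : ιMulti k j (wedgeVec b j s) ∈
        Submodule.span k (Set.range fun s => ιMulti k j (wedgeVec b j s)) :=
      Submodule.subset_span (Set.mem_range_self s)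
    rcases Int.units_eq_one_or (Equiv.Perm.sign e) with h1 | h1 <;> rw [h1]
    · simpa using hsp
    · simpa using Submodule.neg_mem _ hsp
  · rw [Function.not_injective_iff] at hg
    obtain ⟨a, c, hac, hne⟩ := hg
    rw [AlternatingMap.map_eq_zero_of_eq _ _ (by rw [hac]) hne]
    exact Submodule.zero_mem _

lemma ιMulti_mem_span (v : Fin j → V) :
    ιMulti k j v ∈ Submodule.span k (Set.range fun s => ιMulti k j (wedgeVec b j s)) := by
  obtain ⟨c, hc⟩ : ∃ c : Fin j → Fin n → k, v = fun i => ∑ m : Fin n, c i m • b m :=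
    ⟨fun i m => b.repr (v i) m, by funext i; rw [← Module.Basis.sum_repr b (v i)]⟩
  have h2 : ιMulti k j v = (ιMulti k j).toMultilinearMap
      (fun i => ∑ m : Fin n, c i m • b m) := by rw [hc]; rfl
  rw [h2, MultilinearMap.map_sum (ιMulti k j).toMultilinearMap
    (g := fun (i : Fin j) (m : Fin n) => c i m • b m)]
  apply Submodule.sum_mem
  intro g _
  rw [MultilinearMap.map_smul_univ]
  exact Submodule.smul_mem _ _ (ιMulti_basis_mem_span b j g)

lemma span_wedgeVecEl : ⊤ ≤ Submodule.span k (Set.range (wedgeVecEl b j)) := by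
  have hmap : Submodule.map (⋀[k]^j V).subtype (Submodule.span k (Set.range (wedgeVecEl b j)))
      = Submodule.map (⋀[k]^j V).subtype ⊤ := by
    rw [Submodule.map_span, Submodule.map_top, Submodule.range_subtype]
    rw [← Set.range_comp]
    have : ((⋀[k]^j V).subtype ∘ wedgeVecEl b j) = fun s => ιMulti k j (wedgeVec b j s) := rfl
    rw [this]
    refine le_antisymm (Submodule.span_le.2 ?_) ?_
    · rintro x ⟨s, rfl⟩
      exact ιMulti_range k j (Set.mem_range_self _)
    · rw [← ιMulti_span_fixedDegree k j]
      refine Submodule.span_le.2 ?_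
      rintro x ⟨v, rfl⟩
      exact ιMulti_mem_span b j v
  exact le_of_eq ((Submodule.map_injective_of_injective (⋀[k]^j V).injective_subtype hmap).symm)

lemma linearIndependent_wedgeVecEl : LinearIndependent k (wedgeVecEl b j) := by
  rw [linearIndependent_iff]
  intro l hl
  ext s
  have h0 := congrArg (coordFun b j s) hl
  rw [map_zero, Finsupp.linearCombination_apply, Finsupp.sum, map_sum] at h0
  simp only [map_smul, coordFun_wedgeVecEl, smul_eq_mul] at h0
  rw [Finset.sum_eq_single s (fun t _ hts => by rw [if_neg (Ne.symm hts), mul_zero])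
    (fun hs => by simp [Finsupp.notMem_support_iff.1 hs])] at h0
  simpa using h0

/-- The basis of `⋀^j V` indexed by `j`-element subsets of `Fin n`. -/
noncomputable def wedgeBasis : Module.Basis {s : Finset (Fin n) // s.card = j} k (⋀[k]^j V) :=
  Module.Basis.mk (linearIndependent_wedgeVecEl b j) (span_wedgeVecEl b j)

lemma wedgeBasis_coord (s : {s : Finset (Fin n) // s.card = j}) :
    (wedgeBasis b j).coord s = coordFun b j s := by
  apply Module.Basis.ext (wedgeBasis b j)
  intro t
  rw [Module.Basis.coord_apply, Module.Basis.repr_self, wedgeBasis, Module.Basis.mk_apply, coordFun_wedgeVecEl,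
    Finsupp.single_apply]
  simp [eq_comm]

lemma exteriorPowerMap_ιMulti (M : V →ₗ[k] V) (v : Fin j → V) (hv : ιMulti k j v ∈ ⋀[k]^j V) :
    exteriorPowerMap k V j M ⟨ιMulti k j v, hv⟩
      = ⟨ιMulti k j (M ∘ v), ιMulti_range k j (Set.mem_range_self _)⟩ := by
  apply Subtype.ext
  show (ExteriorAlgebra.map M) (ιMulti k j v) = ιMulti k j (M ∘ v)
  rw [ιMulti_apply, ιMulti_apply, map_list_prod, List.map_ofFn]
  simp [Function.comp_def]

/-- Principal minor of a matrix indexed by a subset. -/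
noncomputable def pminor (A : Matrix (Fin n) (Fin n) k) (S : Finset (Fin n)) : k :=
  Matrix.det (A.submatrix (fun i => S.orderIsoOfFin rfl i) (fun i => S.orderIsoOfFin rfl i))

lemma pminor_eq {S : Finset (Fin n)} (h : S.card = j) (A : Matrix (Fin n) (Fin n) k) :
    Matrix.det (A.submatrix (fun i => S.orderIsoOfFin h i) (fun i => S.orderIsoOfFin h i))
      = pminor A S := by
  subst h; rfl

lemma trace_exteriorPowerMap (M : V →ₗ[k] V) :
    LinearMap.trace k (⋀[k]^j V) (exteriorPowerMap k V j M)
      = ∑ s : {s : Finset (Fin n) // s.card = j}, pminor (LinearMap.toMatrix b b M) s.1 := by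
  classical
  rw [LinearMap.trace_eq_matrix_trace k (wedgeBasis b j), Matrix.trace]
  refine Finset.sum_congr rfl fun s _ => ?_
  rw [Matrix.diag_apply, LinearMap.toMatrix_apply, ← Module.Basis.coord_apply, wedgeBasis_coord,
    wedgeBasis, Module.Basis.mk_apply, wedgeVecEl, exteriorPowerMap_ιMulti, coordFun_ιMulti,
    coordAlt_apply]
  have hmat : (Matrix.of fun i l => b.repr ((⇑M ∘ wedgeVec b j s) i) (s.1.orderIsoOfFin s.2 l))
      = Matrix.transpose ((LinearMap.toMatrix b b M).submatrix (fun i => s.1.orderIsoOfFin s.2 i)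
          (fun i => s.1.orderIsoOfFin s.2 i)) := by
    ext i l
    simp [LinearMap.toMatrix_apply, wedgeVec]
  rw [hmat, Matrix.det_transpose, pminor_eq j s.2]

lemma det_eq_pminor_of_rows {S : Finset (Fin n)} {P : Matrix (Fin n) (Fin n) k} {A : Matrix (Fin n) (Fin n) k}
    (hin : ∀ i ∈ S, P i = A i) (hout : ∀ i ∉ S, P i = (1 : Matrix (Fin n) (Fin n) k) i) :
    P.det = pminor A S := by
  classical
  let e : {x // x ∈ S} ⊕ {x // x ∉ S} ≃ Fin n := Equiv.sumCompl (· ∈ S)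
  rw [← Matrix.det_submatrix_equiv_self e P]
  have hblock : P.submatrix e e
      = Matrix.fromBlocks (A.submatrix (fun i : {x // x ∈ S} => (i : Fin n)) (fun i : {x // x ∈ S} => (i : Fin n)))
          (P.submatrix (fun i : {x // x ∈ S} => (i : Fin n)) (fun i : {x // x ∉ S} => (i : Fin n)))
          0 1 := by
    ext i l
    rcases i with i | i <;> rcases l with l | l
    · simp only [Matrix.submatrix_apply, Matrix.fromBlocks_apply₁₁]
      rw [show e (Sum.inl i) = (i : Fin n) from rfl, show e (Sum.inl l) = (l : Fin n) from rfl,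
        hin i i.2]
    · rfl
    · simp only [Matrix.submatrix_apply, Matrix.fromBlocks_apply₂₁, Matrix.zero_apply]
      rw [show e (Sum.inr i) = (i : Fin n) from rfl, show e (Sum.inl l) = (l : Fin n) from rfl,
        hout i i.2]
      exact Matrix.one_apply_ne (fun h => i.2 (h ▸ l.2))
    · simp only [Matrix.submatrix_apply, Matrix.fromBlocks_apply₂₂]
      rw [show e (Sum.inr i) = (i : Fin n) from rfl, show e (Sum.inr l) = (l : Fin n) from rfl,
        hout i i.2]
      rw [Matrix.one_apply, Matrix.one_apply]
      simp [Subtype.ext_iff]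
  rw [hblock, Matrix.det_fromBlocks_zero₂₁, Matrix.det_one, mul_one, pminor]
  rw [← Matrix.det_submatrix_equiv_self (S.orderIsoOfFin rfl).toEquiv
    (A.submatrix (fun i : {x // x ∈ S} => (i : Fin n)) (fun i : {x // x ∈ S} => (i : Fin n)))]
  rfl

open Polynomial in
lemma det_one_add_X_smul_eq_sum_pminor (A : Matrix (Fin n) (Fin n) k) :
    Matrix.det (1 + (X : k[X]) • A.map C)
      = ∑ S : Finset (Fin n), X ^ S.card * C (pminor A S) := by
  classical
  set D := (Matrix.detRowAlternating (n := Fin n) (R := k[X])).toMultilinearMap with hD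
  have hadd := D.map_add_univ (fun i => ((X : k[X]) • A.map C) i)
    (fun i => (1 : Matrix (Fin n) (Fin n) k[X]) i)
  have h1 : (1 + (X : k[X]) • A.map C : Matrix (Fin n) (Fin n) k[X])
      = ((fun i => ((X : k[X]) • A.map C) i) + (fun i => (1 : Matrix (Fin n) (Fin n) k[X]) i)) := by
    funext i l; exact add_comm _ _
  have h2 : Matrix.det (1 + (X : k[X]) • A.map C)
      = ∑ S : Finset (Fin n), D (S.piecewise (fun i => ((X : k[X]) • A.map C) i)
          (fun i => (1 : Matrix (Fin n) (Fin n) k[X]) i)) := by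
    refine Eq.trans ?_ hadd
    exact congrArg D h1
  rw [h2]
  refine Finset.sum_congr rfl fun S _ => ?_
  set P : Matrix (Fin n) (Fin n) k := Matrix.of fun i l =>
    if i ∈ S then A i l else (1 : Matrix (Fin n) (Fin n) k) i l with hP
  have hpiece : (S.piecewise (fun i => ((X : k[X]) • A.map C) i)
        (fun i => (1 : Matrix (Fin n) (Fin n) k[X]) i))
      = S.piecewise (fun i => (X : k[X]) • (P.map C) i) (fun i => (P.map C) i) := by
    funext i
    by_cases hi : i ∈ S
    · rw [Finset.piecewise_eq_of_mem _ _ _ hi, Finset.piecewise_eq_of_mem _ _ _ hi]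
      funext l
      simp [hP, hi, Matrix.map_apply]
    · rw [Finset.piecewise_eq_of_notMem _ _ _ hi, Finset.piecewise_eq_of_notMem _ _ _ hi]
      funext l
      simp only [hP, Matrix.map_apply, Matrix.of_apply, if_neg hi, Matrix.one_apply]
      split <;> simp
  refine Eq.trans (congrArg D hpiece) ?_
  refine Eq.trans (D.map_piecewise_smul (fun _ => (X : k[X])) (fun i => (P.map C) i) S) ?_
  have hdet : D (fun i => (P.map C) i) = C (pminor A S) := by
    rw [show D (fun i => (P.map C) i) = (P.map (C : k →+* k[X])).det from rfl,
      show (P.map (C : k →+* k[X])) = (C : k →+* k[X]).mapMatrix P from rfl,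
      ← RingHom.map_det]
    rw [det_eq_pminor_of_rows (S := S) (A := A) (P := P)
      (fun i hi => by funext l; simp [hP, hi])
      (fun i hi => by funext l; simp [hP, hi])]
  rw [Finset.prod_const, hdet, smul_eq_mul]

end Aux

open Finset Polynomial TensorProduct in
/-- For `M ∈ End(V)`, `V` finite-dimensional over `k`, one has in `k[t]`:
`det(1 + t·M) = ∑_{j=0}^{dim V} Tr(Λ^j M) t^j`, where `1 + t·M` is viewed as an
endomorphism of `V ⊗ k[t]`. -/
theorem det_one_add_smul_X_eq_sum_trace_exteriorPower
    (k V : Type*) [Field k] [AddCommGroup V] [Module k V] [FiniteDimensional k V]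
    (M : V →ₗ[k] V) :
    LinearMap.det
        (1 + (X : k[X]) • (M.baseChange k[X]) :
          (k[X] ⊗[k] V) →ₗ[k[X]] (k[X] ⊗[k] V)) =
      ∑ j ∈ range (Module.finrank k V + 1),
        C (LinearMap.trace k (⋀[k]^j V) (exteriorPowerMap k V j M)) * X ^ j := by
  classical
  set n := Module.finrank k V with hn
  set b : Module.Basis (Fin n) k V := Module.finBasis k V with hb
  set A : Matrix (Fin n) (Fin n) k := LinearMap.toMatrix b b M with hA
  set B : Module.Basis (Fin n) k[X] (k[X] ⊗[k] V) := Algebra.TensorProduct.basis k[X] b with hB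
  -- LHS as a matrix determinant
  rw [← LinearMap.det_toMatrix B, map_add, map_smul, LinearMap.toMatrix_one,
    LinearMap.toMatrix_baseChange, Polynomial.algebraMap_eq, det_one_add_X_smul_eq_sum_pminor]
  -- RHS
  have htr : ∀ j, LinearMap.trace k (⋀[k]^j V) (exteriorPowerMap k V j M)
      = ∑ s ∈ Finset.univ.filter (fun s : Finset (Fin n) => s.card = j), pminor A s := by
    intro j
    rw [trace_exteriorPowerMap b j M, ← hA]
    rw [Finset.sum_subtype (p := fun s : Finset (Fin n) => s.card = j)
      (Finset.univ.filter (fun s : Finset (Fin n) => s.card = j))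
      (fun s => by simp) (fun s => pminor A s)]
  calc ∑ S : Finset (Fin n), X ^ S.card * C (pminor A S)
      = ∑ j ∈ range (n + 1), ∑ S ∈ Finset.univ.filter (fun s : Finset (Fin n) => s.card = j),
          X ^ S.card * C (pminor A S) := by
        rw [Finset.sum_fiberwise_of_maps_to]
        intro S _
        rw [Finset.mem_range, Nat.lt_succ_iff]
        simpa using Finset.card_le_univ S
    _ = ∑ j ∈ range (n + 1),
        C (LinearMap.trace k (⋀[k]^j V) (exteriorPowerMap k V j M)) * X ^ j := by
        refine Finset.sum_congr rfl fun j _ => ?_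
        rw [htr j, map_sum, Finset.sum_mul]
        refine Finset.sum_congr rfl fun S hS => ?_
        rw [Finset.mem_filter] at hS
        rw [hS.2, mul_comm]
end
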